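/- arXiv:2501.08602 — 2 statements merged into one kernel-verified Lean document; each statement's English description precedes it below -/
import Mathlib

section
/- For the generalized Frobenius number of three consecutive triangular numbers with s = 12: g(t_n, t_{n+1}, t_{n+2}; 12) = ((n+1)(n+2)/4)·(9n) − 1 for every even integer n ≥ 14, and g(t_n, t_{n+1}, t_{n+2}; 12) = ((n+1)(n+2)/4)·(9n − 3) − 1 for every odd integer n ≥ 17. -/
open Finset

/-- Number of representations of `m` as `∑ i, a i * x i` with nonnegative integers `x i`
(for positive weights `a i`, every solution satisfies `x i ≤ m`). -/
def repCount {k : ℕ} (a : Fin k → ℕ) (m : ℕ) : ℕ :=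
  (Finset.univ.filter (fun x : Fin k → Fin (m + 1) => ∑ i, a i * (x i : ℕ) = m)).card

/-- Representation count extended to the integers (no representations of negative numbers). -/
def repCountZ {k : ℕ} (a : Fin k → ℕ) (m : ℤ) : ℕ :=
  if 0 ≤ m then repCount a m.toNat else 0

/-- The generalized Frobenius number `g(a; s)`: the largest integer having at most `s`
representations by the tuple `a`. -/
noncomputable def genFrob {k : ℕ} (a : Fin k → ℕ) (s : ℕ) : ℤ :=
  sSup {m : ℤ | repCountZ a m ≤ s}

/-- The `n`-th triangular number `t n = n(n+1)/2`. -/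
def t (n : ℕ) : ℕ := n * (n + 1) / 2

/-- `N_s^even = 6⌊√(s+1)⌋ - 6`. -/
def NEven (s : ℕ) : ℤ := 6 * (Nat.sqrt (s + 1) : ℤ) - 6

/-- `N_s^odd = 6⌊(√(4s+5) - 1)/2⌋ - 3`. -/
def NOdd (s : ℕ) : ℤ := 6 * (((Nat.sqrt (4 * s + 5) - 1) / 2 : ℕ) : ℤ) - 3

/-- `δ_s = 1` if `s ≥ ⌊√s⌋² + ⌊√s⌋`, and `0` otherwise. -/
def deltaS (s : ℕ) : ℤ := if Nat.sqrt s ^ 2 + Nat.sqrt s ≤ s then 1 else 0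

/-- `q_s = 2⌊√s⌋ + 2 + δ_s`. -/
def qS (s : ℕ) : ℤ := 2 * (Nat.sqrt s : ℤ) + 2 + deltaS s

/-- `c_s = s - ⌊√s⌋² - δ_s⌊√s⌋`. -/
def cS (s : ℕ) : ℤ := (s : ℤ) - (Nat.sqrt s : ℤ) ^ 2 - deltaS s * (Nat.sqrt s : ℤ)

/-- For `s = k(k+1) + i` with `0 ≤ i ≤ 2k+1`: `x_s^even`. -/
def xEvenN (k i : ℕ) : ℕ := if i ≤ k then i else i - k - 1

/-- For `s = k(k+1) + i` with `0 ≤ i ≤ 2k+1`: `y_s^even`. -/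
def yEvenN (k i : ℕ) : ℕ := if i ≤ k then 2 * (k - i) else 4 * k + 3 - 2 * i

/-- For `s = k(k+1) + i` with `0 ≤ i ≤ 2k+1`: `x_s^odd`. -/
def xOddN (k i : ℕ) : ℕ := if i ≤ k then 2 * i else 2 * (i - k) - 1

/-- For `s = k(k+1) + i` with `0 ≤ i ≤ 2k+1`: `y_s^odd`. -/
def yOddN (k i : ℕ) : ℕ := if i ≤ k then k - i else 2 * k + 1 - i

/-!
Write `n = 2m` (resp. `n = 2m + 1`), so that the weights are `m(2m+1), (m+1)(2m+1), (m+1)(2m+3)`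
(resp. `(m+1)(2m+1), (m+1)(2m+3), (m+2)(2m+3)`). Their integer relations are spanned by
`(-2(m+1), -3, 2m+1)` and `(-(m+1), m, 0)` (resp. `(0, -(m+2), m+1)` and `(-(2m+3), 2m+1, 0)`).
Reducing a representation of `F = 9m(m+1)(2m+1) - 1` (resp. `3(m+1)(3m+1)(2m+3) - 1`) modulo the
shared factors shows that every representation is the integer point `(7m+6, -1, 2m)`
(resp. `(8m+11, -1, m)`) moved by a relation whose coefficients lie in a triangle of 12 lattice
points. Any `N > F` has a representation whose last two coordinates are least residues and whose
first one is then large; moving it by the same triangle together with the zero relation, which for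
`F` is the excluded point with `y = -1`, gives 13 representations.
-/

def solutions (a b c N : ℤ) : Set (ℤ × ℤ × ℤ) :=
  {v | 0 ≤ v.1 ∧ 0 ≤ v.2.1 ∧ 0 ≤ v.2.2 ∧ a * v.1 + b * v.2.1 + c * v.2.2 = N}

lemma repCountZ_eq_encard_solutions {a b c : ℕ} (ha : 0 < a) (hb : 0 < b) (hc : 0 < c) (N : ℤ) :
    (repCountZ ![a, b, c] N : ℕ∞) = (solutions a b c N).encard := by
  unfold repCountZ
  split_ifs with hN
  · lift N to ℕ using hN
    let φ : (Fin 3 → Fin (N + 1)) → ℤ × ℤ × ℤ := fun f => ((f 0 : ℕ), (f 1 : ℕ), (f 2 : ℕ))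
    have hφ : Function.Injective φ := by
      intro f g h
      simp only [φ, Prod.mk.injEq, Nat.cast_inj, Fin.val_inj] at h
      funext i
      fin_cases i <;> simp [h]
    have himage : solutions a b c N =
        φ '' (univ.filter fun f : Fin 3 → Fin (N + 1) => ∑ i, ![a, b, c] i * (f i : ℕ) = N) := by
      ext ⟨x, y, z⟩
      simp only [solutions, Set.mem_ofPred_eq, coe_filter, mem_univ, true_and, Set.mem_image,
        Fin.sum_univ_three, φ]
      constructor
      · rintro ⟨hx, hy, hz, h⟩
        lift x to ℕ using hx
        lift y to ℕ using hy
        lift z to ℕ using hz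
        have h : a * x + b * y + c * z = N := by exact_mod_cast h
        refine ⟨![⟨x, ?_⟩, ⟨y, ?_⟩, ⟨z, ?_⟩], by simpa using h, by simp⟩ <;> nlinarith
      · rintro ⟨f, h, hf⟩
        simp only [Prod.mk.injEq] at hf
        obtain ⟨rfl, rfl, rfl⟩ := hf
        simp only [Matrix.cons_val_zero, Matrix.cons_val_one, Matrix.cons_val_two] at h
        refine ⟨by positivity, by positivity, by positivity, by exact_mod_cast h⟩
    rw [Int.toNat_natCast, himage, hφ.encard_image, Set.encard_coe_eq_coe_finsetCard, repCount]
  · rw [Nat.cast_zero, eq_comm, Set.encard_eq_zero, Set.eq_empty_iff_forall_notMem]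
    rintro ⟨x, y, z⟩ ⟨hx, hy, hz, h⟩
    have : (0 : ℤ) ≤ a * x + b * y + c * z := by positivity
    exact hN (h ▸ this)

lemma genFrob_eq_of_encard_solutions {a b c : ℕ} (ha : 0 < a) (hb : 0 < b) (hc : 0 < c)
    {s : ℕ} {F : ℤ} (hF : (solutions a b c F).encard ≤ s)
    (hlt : ∀ N, F < N → s < (solutions a b c N).encard) :
    genFrob ![a, b, c] s = F := by
  have hcount (N : ℤ) : repCountZ ![a, b, c] N ≤ s ↔ (solutions a b c N).encard ≤ s := by
    rw [← repCountZ_eq_encard_solutions ha hb hc, Nat.cast_le]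
  refine IsGreatest.csSup_eq ⟨(hcount F).2 hF, fun N hN => not_lt.1 fun hFN => ?_⟩
  exact (hlt N hFN).not_ge ((hcount N).1 hN)

section Even

variable {m : ℤ}

def evenPoint (m X Y Z : ℤ) (q : ℤ × ℤ) : ℤ × ℤ × ℤ :=
  (X - (2 * q.1 + q.2) * (m + 1), Y + q.2 * m - 3 * q.1, Z + q.1 * (2 * m + 1))

noncomputable def evenIndex : Finset (ℤ × ℤ) :=
  (Icc 0 3 ×ˢ Icc 1 6).filter fun q => 2 * q.1 + q.2 ≤ 6

lemma evenPoint_injective (hm : 0 < m) (X Y Z : ℤ) : (evenPoint m X Y Z).Injective := by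
  rintro ⟨k, s⟩ ⟨k', s'⟩ h
  simp only [evenPoint, Prod.mk.injEq] at h
  obtain ⟨-, hy, hz⟩ := h
  obtain rfl : k = k' := mul_right_cancel₀ (by omega) (add_left_cancel hz)
  obtain rfl : s = s' := mul_right_cancel₀ hm.ne' (by linarith)
  rfl

lemma evenPoint_weight (X Y Z : ℤ) (q : ℤ × ℤ) :
    m * (2 * m + 1) * (evenPoint m X Y Z q).1 + (m + 1) * (2 * m + 1) * (evenPoint m X Y Z q).2.1
      + (m + 1) * (2 * m + 3) * (evenPoint m X Y Z q).2.2
      = m * (2 * m + 1) * X + (m + 1) * (2 * m + 1) * Y + (m + 1) * (2 * m + 3) * Z := by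
  simp only [evenPoint]
  ring

lemma exists_evenPoint_eq (hm : 0 < m) {x y z : ℤ}
    (h : m * (2 * m + 1) * x + (m + 1) * (2 * m + 1) * y + (m + 1) * (2 * m + 3) * z
      = 9 * m * (m + 1) * (2 * m + 1) - 1) :
    ∃ q, evenPoint m (7 * m + 6) (-1) (2 * m) q = (x, y, z) := by
  obtain ⟨k, hk⟩ : 2 * m + 1 ∣ z - 2 * m :=
    ⟨9 * m * (m + 1) - m * x - (m + 1) * y - (m + 2) * z - 1, by linear_combination h⟩
  obtain ⟨s, hs⟩ : m ∣ y + 3 * k + 1 :=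
    ⟨9 * (m + 1) * (2 * m + 1) - (2 * m + 1) * x - (2 * m + 3) * y - (2 * m + 5) * z - 6 - 6 * k,
      by linear_combination h - 3 * hk⟩
  have hx : m * (2 * m + 1) * x = m * (2 * m + 1) * (7 * m + 6 - (2 * k + s) * (m + 1)) := by
    linear_combination h - (m + 1) * (2 * m + 1) * hs - (m + 1) * (2 * m + 3) * hk
  refine ⟨(k, s), ?_⟩
  simp only [evenPoint, Prod.mk.injEq]
  refine ⟨(mul_left_cancel₀ (by positivity) hx).symm, by linarith, by linarith⟩

lemma solutions_even_subset (hm : 0 < m) :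
    solutions (m * (2 * m + 1)) ((m + 1) * (2 * m + 1)) ((m + 1) * (2 * m + 3))
        (9 * m * (m + 1) * (2 * m + 1) - 1) ⊆
      evenPoint m (7 * m + 6) (-1) (2 * m) '' evenIndex := by
  rintro ⟨x, y, z⟩ ⟨hx, hy, hz, h⟩
  obtain ⟨⟨k, s⟩, hq⟩ := exists_evenPoint_eq hm h
  refine ⟨(k, s), ?_, hq⟩
  simp only [evenPoint, Prod.mk.injEq] at hq
  obtain ⟨rfl, rfl, rfl⟩ := hq
  have hk : 0 ≤ k := by nlinarith
  have hs : 1 ≤ s := by nlinarith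
  have hks : 2 * k + s ≤ 6 := by nlinarith
  simp only [mem_coe, evenIndex, mem_filter, mem_product, mem_Icc]
  omega

lemma exists_even_base_of_le (hm : 0 < m) {N : ℤ} (hN : 9 * m * (m + 1) * (2 * m + 1) ≤ N) :
    ∃ X Y Z, 6 * (m + 1) ≤ X ∧ 0 ≤ Y ∧ 0 ≤ Z ∧
      m * (2 * m + 1) * X + (m + 1) * (2 * m + 1) * Y + (m + 1) * (2 * m + 3) * Z = N := by
  set Z := N % (2 * m + 1)
  set u := N / (2 * m + 1) - (m + 2) * Z
  set Y := u % m
  have hZ : Z < 2 * m + 1 := Int.emod_lt_of_pos _ (by omega)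
  have hY : Y < m := Int.emod_lt_of_pos _ hm
  have h : m * (2 * m + 1) * (u / m - Y) + (m + 1) * (2 * m + 1) * Y + (m + 1) * (2 * m + 3) * Z
      = N := by
    linear_combination Int.mul_ediv_add_emod N (2 * m + 1) + (2 * m + 1) * Int.mul_ediv_add_emod u m
  refine ⟨u / m - Y, Y, Z, ?_, Int.emod_nonneg _ hm.ne', Int.emod_nonneg _ (by omega), h⟩
  by_contra! hX
  have := mul_le_mul_of_nonneg_left (show u / m - Y ≤ 6 * m + 5 by omega)
    (show 0 ≤ m * (2 * m + 1) by positivity)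
  have := mul_le_mul_of_nonneg_left (show Y ≤ m - 1 by omega)
    (show 0 ≤ (m + 1) * (2 * m + 1) by positivity)
  have := mul_le_mul_of_nonneg_left (show Z ≤ 2 * m by omega)
    (show 0 ≤ (m + 1) * (2 * m + 3) by positivity)
  nlinarith

lemma evenPoint_mem_solutions (hm : 6 ≤ m) {X Y Z N : ℤ} (hX : 6 * (m + 1) ≤ X) (hY : 0 ≤ Y)
    (hZ : 0 ≤ Z)
    (h : m * (2 * m + 1) * X + (m + 1) * (2 * m + 1) * Y + (m + 1) * (2 * m + 3) * Z = N)
    {q : ℤ × ℤ} (hq : q ∈ insert 0 evenIndex) :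
    evenPoint m X Y Z q ∈
      solutions (m * (2 * m + 1)) ((m + 1) * (2 * m + 1)) ((m + 1) * (2 * m + 3)) N := by
  obtain ⟨k, s⟩ := q
  have hnonneg :
      0 ≤ X - (2 * k + s) * (m + 1) ∧ 0 ≤ Y + s * m - 3 * k ∧ 0 ≤ Z + k * (2 * m + 1) := by
    simp only [evenIndex, mem_insert, mem_filter, mem_product, mem_Icc, Prod.mk_eq_zero] at hq
    rcases hq with ⟨rfl, rfl⟩ | ⟨⟨⟨hk, -⟩, hs, -⟩, hks⟩
    · omega
    · exact ⟨by nlinarith, by nlinarith [show k ≤ 2 by omega], by nlinarith⟩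
  exact ⟨hnonneg.1, hnonneg.2.1, hnonneg.2.2, (evenPoint_weight X Y Z _).trans h⟩

lemma encard_solutions_even_le (hm : 0 < m) :
    (solutions (m * (2 * m + 1)) ((m + 1) * (2 * m + 1)) ((m + 1) * (2 * m + 3))
      (9 * m * (m + 1) * (2 * m + 1) - 1)).encard ≤ 12 :=
  calc _ ≤ (evenPoint m (7 * m + 6) (-1) (2 * m) '' evenIndex).encard :=
        Set.encard_le_encard (solutions_even_subset hm)
    _ ≤ (evenIndex : Set (ℤ × ℤ)).encard := Set.encard_image_le _ _
    _ = 12 := by rw [Set.encard_coe_eq_coe_finsetCard]; decide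

lemma lt_encard_solutions_even (hm : 6 ≤ m) {N : ℤ} (hN : 9 * m * (m + 1) * (2 * m + 1) - 1 < N) :
    12 < (solutions (m * (2 * m + 1)) ((m + 1) * (2 * m + 1)) ((m + 1) * (2 * m + 3))
      N).encard := by
  obtain ⟨X, Y, Z, hX, hY, hZ, h⟩ := exists_even_base_of_le (m := m) (N := N) (by omega) (by omega)
  calc (12 : ℕ∞) < ((insert 0 evenIndex : Finset (ℤ × ℤ)) : Set (ℤ × ℤ)).encard := by
        rw [Set.encard_coe_eq_coe_finsetCard]; decide
    _ ≤ _ := Set.encard_le_encard_of_injOn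
        (fun q hq => evenPoint_mem_solutions hm hX hY hZ h hq)
        (evenPoint_injective (by omega) X Y Z).injOn

end Even

section Odd

variable {m : ℤ}

def oddPoint (m X Y Z : ℤ) (q : ℤ × ℤ) : ℤ × ℤ × ℤ :=
  (X - q.2 * (2 * m + 3), Y + q.2 * (2 * m + 1) - q.1 * (m + 2), Z + q.1 * (m + 1))

noncomputable def oddIndex : Finset (ℤ × ℤ) :=
  (Icc 0 5 ×ˢ Icc 1 3).filter fun q => q.1 + 1 ≤ 2 * q.2

lemma oddPoint_injective (hm : 0 < m) (X Y Z : ℤ) : (oddPoint m X Y Z).Injective := by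
  rintro ⟨j, p⟩ ⟨j', p'⟩ h
  simp only [oddPoint, Prod.mk.injEq] at h
  obtain ⟨hx, -, hz⟩ := h
  obtain rfl : j = j' := mul_right_cancel₀ (by omega) (add_left_cancel hz)
  obtain rfl : p = p' := mul_right_cancel₀ (by omega) (sub_right_injective hx)
  rfl

lemma oddPoint_weight (X Y Z : ℤ) (q : ℤ × ℤ) :
    (m + 1) * (2 * m + 1) * (oddPoint m X Y Z q).1
      + (m + 1) * (2 * m + 3) * (oddPoint m X Y Z q).2.1
      + (m + 2) * (2 * m + 3) * (oddPoint m X Y Z q).2.2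
      = (m + 1) * (2 * m + 1) * X + (m + 1) * (2 * m + 3) * Y + (m + 2) * (2 * m + 3) * Z := by
  simp only [oddPoint]
  ring

lemma exists_oddPoint_eq (hm : 0 < m) {x y z : ℤ}
    (h : (m + 1) * (2 * m + 1) * x + (m + 1) * (2 * m + 3) * y + (m + 2) * (2 * m + 3) * z
      = 3 * (m + 1) * (3 * m + 1) * (2 * m + 3) - 1) :
    ∃ q, oddPoint m (8 * m + 11) (-1) m q = (x, y, z) := by
  obtain ⟨j, hj⟩ : m + 1 ∣ z - m :=
    ⟨3 * (3 * m + 1) * (2 * m + 3) - (2 * m + 1) * x - (2 * m + 3) * y - (2 * m + 5) * z - 1,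
      by linear_combination h⟩
  obtain ⟨p, hp⟩ : 2 * m + 1 ∣ y + j * (m + 2) + 1 :=
    ⟨8 * m ^ 2 + 18 * m + 9 - (m + 2) ^ 2 * j - (m + 2) * y - (m + 1) * x,
      by linear_combination h - (m + 2) * (2 * m + 3) * hj⟩
  have hx : (m + 1) * (2 * m + 1) * x = (m + 1) * (2 * m + 1) * (8 * m + 11 - p * (2 * m + 3)) := by
    linear_combination h - (m + 1) * (2 * m + 3) * hp - (m + 2) * (2 * m + 3) * hj
  refine ⟨(j, p), ?_⟩
  simp only [oddPoint, Prod.mk.injEq]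
  refine ⟨(mul_left_cancel₀ (by positivity) hx).symm, by linarith, by linarith⟩

lemma solutions_odd_subset (hm : 0 < m) :
    solutions ((m + 1) * (2 * m + 1)) ((m + 1) * (2 * m + 3)) ((m + 2) * (2 * m + 3))
        (3 * (m + 1) * (3 * m + 1) * (2 * m + 3) - 1) ⊆
      oddPoint m (8 * m + 11) (-1) m '' oddIndex := by
  rintro ⟨x, y, z⟩ ⟨hx, hy, hz, h⟩
  obtain ⟨⟨j, p⟩, hq⟩ := exists_oddPoint_eq hm h
  refine ⟨(j, p), ?_, hq⟩
  simp only [oddPoint, Prod.mk.injEq] at hq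
  obtain ⟨rfl, rfl, rfl⟩ := hq
  have hj : 0 ≤ j := by nlinarith
  have hp : p ≤ 3 := by nlinarith
  have hjp : j + 1 ≤ 2 * p := by nlinarith
  simp only [mem_coe, oddIndex, mem_filter, mem_product, mem_Icc]
  omega

lemma exists_odd_base_of_le (hm : 0 < m) {N : ℤ}
    (hN : 3 * (m + 1) * (3 * m + 1) * (2 * m + 3) ≤ N) :
    ∃ X Y Z, 3 * (2 * m + 3) ≤ X ∧ 0 ≤ Y ∧ 0 ≤ Z ∧
      (m + 1) * (2 * m + 1) * X + (m + 1) * (2 * m + 3) * Y + (m + 2) * (2 * m + 3) * Z = N := by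
  set Z := N % (m + 1)
  set u := N / (m + 1) - (2 * m + 5) * Z
  set Y := (m + 1) * u % (2 * m + 1)
  set X := (2 * m + 3) * ((m + 1) * u / (2 * m + 1)) - (m + 2) * u
  have hZ : Z < m + 1 := Int.emod_lt_of_pos _ (by omega)
  have hY : Y < 2 * m + 1 := Int.emod_lt_of_pos _ (by omega)
  have h :
      (m + 1) * (2 * m + 1) * X + (m + 1) * (2 * m + 3) * Y + (m + 2) * (2 * m + 3) * Z = N := by
    linear_combination Int.mul_ediv_add_emod N (m + 1)
      + (m + 1) * (2 * m + 3) * Int.mul_ediv_add_emod ((m + 1) * u) (2 * m + 1)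
  refine ⟨X, Y, Z, ?_, Int.emod_nonneg _ (by omega), Int.emod_nonneg _ (by omega), h⟩
  by_contra! hX
  have := mul_le_mul_of_nonneg_left (show X ≤ 6 * m + 8 by omega)
    (show 0 ≤ (m + 1) * (2 * m + 1) by positivity)
  have := mul_le_mul_of_nonneg_left (show Y ≤ 2 * m by omega)
    (show 0 ≤ (m + 1) * (2 * m + 3) by positivity)
  have := mul_le_mul_of_nonneg_left (show Z ≤ m by omega)
    (show 0 ≤ (m + 2) * (2 * m + 3) by positivity)
  nlinarith

lemma oddPoint_mem_solutions (hm : 7 ≤ m) {X Y Z N : ℤ} (hX : 3 * (2 * m + 3) ≤ X) (hY : 0 ≤ Y)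
    (hZ : 0 ≤ Z)
    (h : (m + 1) * (2 * m + 1) * X + (m + 1) * (2 * m + 3) * Y + (m + 2) * (2 * m + 3) * Z = N)
    {q : ℤ × ℤ} (hq : q ∈ insert 0 oddIndex) :
    oddPoint m X Y Z q ∈
      solutions ((m + 1) * (2 * m + 1)) ((m + 1) * (2 * m + 3)) ((m + 2) * (2 * m + 3)) N := by
  obtain ⟨j, p⟩ := q
  have hnonneg : 0 ≤ X - p * (2 * m + 3) ∧ 0 ≤ Y + p * (2 * m + 1) - j * (m + 2) ∧
      0 ≤ Z + j * (m + 1) := by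
    simp only [oddIndex, mem_insert, mem_filter, mem_product, mem_Icc, Prod.mk_eq_zero] at hq
    rcases hq with ⟨rfl, rfl⟩ | ⟨⟨⟨hj, -⟩, -, hp⟩, hjp⟩
    · omega
    · have := mul_le_mul_of_nonneg_right (show j ≤ 2 * p - 1 by omega) (show 0 ≤ m + 2 by omega)
      exact ⟨by nlinarith, by nlinarith, by nlinarith⟩
  exact ⟨hnonneg.1, hnonneg.2.1, hnonneg.2.2, (oddPoint_weight X Y Z _).trans h⟩

lemma encard_solutions_odd_le (hm : 0 < m) :
    (solutions ((m + 1) * (2 * m + 1)) ((m + 1) * (2 * m + 3)) ((m + 2) * (2 * m + 3))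
      (3 * (m + 1) * (3 * m + 1) * (2 * m + 3) - 1)).encard ≤ 12 :=
  calc _ ≤ (oddPoint m (8 * m + 11) (-1) m '' oddIndex).encard :=
        Set.encard_le_encard (solutions_odd_subset hm)
    _ ≤ (oddIndex : Set (ℤ × ℤ)).encard := Set.encard_image_le _ _
    _ = 12 := by rw [Set.encard_coe_eq_coe_finsetCard]; decide

lemma lt_encard_solutions_odd (hm : 7 ≤ m) {N : ℤ}
    (hN : 3 * (m + 1) * (3 * m + 1) * (2 * m + 3) - 1 < N) :
    12 < (solutions ((m + 1) * (2 * m + 1)) ((m + 1) * (2 * m + 3)) ((m + 2) * (2 * m + 3))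
      N).encard := by
  obtain ⟨X, Y, Z, hX, hY, hZ, h⟩ := exists_odd_base_of_le (m := m) (N := N) (by omega) (by omega)
  calc (12 : ℕ∞) < ((insert 0 oddIndex : Finset (ℤ × ℤ)) : Set (ℤ × ℤ)).encard := by
        rw [Set.encard_coe_eq_coe_finsetCard]; decide
    _ ≤ _ := Set.encard_le_encard_of_injOn
        (fun q hq => oddPoint_mem_solutions hm hX hY hZ h hq)
        (oddPoint_injective (by omega) X Y Z).injOn

end Odd

lemma t_two_mul (k : ℕ) : t (2 * k) = k * (2 * k + 1) := by
  rw [t, show 2 * k * (2 * k + 1) = 2 * (k * (2 * k + 1)) by ring,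
    Nat.mul_div_cancel_left _ two_pos]

lemma t_two_mul_add_one (k : ℕ) : t (2 * k + 1) = (k + 1) * (2 * k + 1) := by
  rw [t, show (2 * k + 1) * (2 * k + 1 + 1) = 2 * ((k + 1) * (2 * k + 1)) by ring,
    Nat.mul_div_cancel_left _ two_pos]

lemma genFrob_even (m : ℕ) (hm : 6 ≤ m) :
    genFrob ![t (2 * m), t (2 * m + 1), t (2 * m + 2)] 12 = 9 * m * (m + 1) * (2 * m + 1) - 1 := by
  have hc : (((m + 1) * (2 * (m + 1) + 1) : ℕ) : ℤ) = (m + 1) * (2 * m + 3) := by push_cast; ring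
  rw [t_two_mul, t_two_mul_add_one, show 2 * m + 2 = 2 * (m + 1) by ring, t_two_mul]
  refine genFrob_eq_of_encard_solutions (by positivity) (by positivity) (by positivity) ?_
    fun N hN => ?_
  · rw [hc]; push_cast
    exact encard_solutions_even_le (by omega)
  · rw [hc]; push_cast
    exact lt_encard_solutions_even (by omega) hN

lemma genFrob_odd (m : ℕ) (hm : 7 ≤ m) :
    genFrob ![t (2 * m + 1), t (2 * m + 1 + 1), t (2 * m + 1 + 2)] 12
      = 3 * (m + 1) * (3 * m + 1) * (2 * m + 3) - 1 := by
  have hb : (((m + 1) * (2 * (m + 1) + 1) : ℕ) : ℤ) = (m + 1) * (2 * m + 3) := by push_cast; ring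
  have hc : (((m + 1 + 1) * (2 * (m + 1) + 1) : ℕ) : ℤ) = (m + 2) * (2 * m + 3) := by
    push_cast; ring
  rw [t_two_mul_add_one, show 2 * m + 1 + 1 = 2 * (m + 1) by ring, t_two_mul,
    show 2 * m + 1 + 2 = 2 * (m + 1) + 1 by ring, t_two_mul_add_one]
  refine genFrob_eq_of_encard_solutions (by positivity) (by positivity) (by positivity) ?_
    fun N hN => ?_
  · rw [hb, hc]; push_cast
    exact encard_solutions_odd_le (by omega)
  · rw [hb, hc]; push_cast
    exact lt_encard_solutions_odd (by omega) hN

/-- `g(t_n, t_{n+1}, t_{n+2}; 12) = ((n+1)(n+2)/4)(9n) - 1` for even `n ≥ 14`, and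
`g(t_n, t_{n+1}, t_{n+2}; 12) = ((n+1)(n+2)/4)(9n - 3) - 1` for odd `n ≥ 17`. -/
theorem stmt_18 :
    (∀ n : ℕ, Even n → 14 ≤ n →
      genFrob ![t n, t (n + 1), t (n + 2)] 12 =
        ((n : ℤ) + 1) * ((n : ℤ) + 2) * (9 * (n : ℤ)) / 4 - 1) ∧
    (∀ n : ℕ, Odd n → 17 ≤ n →
      genFrob ![t n, t (n + 1), t (n + 2)] 12 =
        ((n : ℤ) + 1) * ((n : ℤ) + 2) * (9 * (n : ℤ) - 3) / 4 - 1) := by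
  refine ⟨fun n hn hn14 => ?_, fun n hn hn17 => ?_⟩
  · obtain ⟨m, rfl⟩ := hn
    rw [← two_mul, genFrob_even m (by omega)]
    push_cast
    rw [show (2 * (m : ℤ) + 1) * (2 * m + 2) * (9 * (2 * m)) = 4 * (9 * m * (m + 1) * (2 * m + 1))
      by ring, Int.mul_ediv_cancel_left _ four_ne_zero]
  · obtain ⟨m, rfl⟩ := hn
    rw [genFrob_odd m (by omega)]
    push_cast
    rw [show (2 * (m : ℤ) + 1 + 1) * (2 * m + 1 + 2) * (9 * (2 * m + 1) - 3)
      = 4 * (3 * (m + 1) * (3 * m + 1) * (2 * m + 3)) by ring,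
      Int.mul_ediv_cancel_left _ four_ne_zero]
end

section
/- For the generalized Frobenius number of three consecutive triangular numbers with s = 16: g(t_n, t_{n+1}, t_{n+2}; 16) = ((n+1)(n+2)/4)·(10n) − 1 for n = 17 and for every integer n ≥ 19. -/
open Finset

/-!
Write the triple as `(u Q, P Q, P v)`: for `n = 2k` take `(u, Q, P, v) = (k, 2k+1, k+1, 2k+3)`,
for `n = 2k+1` take `(2k+1, k+1, 2k+3, k+2)`. Then `u Q ≡ 1 (mod P)` and `P v ≡ 1 (mod Q)`, so a
representation `m = u Q x + P Q y + P v z` has `x ≡ m (mod P)` and `z ≡ m (mod Q)`. Writing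
`m = u Q x₀ + P Q L + P v z₀` with `x₀ < P`, `z₀ < Q`, the representations of `m` correspond to the
lattice points `u i + v j ≤ L` through `x = x₀ + P i`, `z = z₀ + Q j`, `y = L - u i - v j`.
Their number grows with `L`, and the largest `m` with a given `L = M` is
`u Q (P - 1) + P Q M + P v (Q - 1)`. For `s = 16` the threshold is `M = 7k - 1` (`n` even,
`k ≥ 10`) resp. `M = 7k + 4` (`n` odd, `k ≥ 8`): the triangle `u i + v j ≤ M` holds 16 points
and gains one at `M + 1`.
-/

-- For positive `u` and `v` the bound `L + 1` on the coordinates cuts nothing off.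
def latticePoints (u v L : ℕ) : Finset (ℕ × ℕ) :=
  (range (L + 1) ×ˢ range (L + 1)).filter fun p => u * p.1 + v * p.2 ≤ L

theorem latticePoints_mono {u v L L' : ℕ} (h : L ≤ L') :
    latticePoints u v L ⊆ latticePoints u v L' := by
  intro p hp
  simp only [latticePoints, mem_filter, mem_product, mem_range] at hp ⊢
  omega

theorem card_latticePoints_lt_succ {u v L i j : ℕ} (hu : 0 < u) (hv : 0 < v)
    (h : u * i + v * j = L + 1) : #(latticePoints u v L) < #(latticePoints u v (L + 1)) := by
  refine card_lt_card ⟨latticePoints_mono L.le_succ, fun hsub => ?_⟩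
  have hi : i ≤ u * i := Nat.le_mul_of_pos_left i hu
  have hj : j ≤ v * j := Nat.le_mul_of_pos_left j hv
  have hmem : (i, j) ∈ latticePoints u v (L + 1) := by
    simp only [latticePoints, mem_filter, mem_product, mem_range]; omega
  have := hsub hmem
  simp only [latticePoints, mem_filter] at this
  omega

section Representation

variable {u P Q v : ℕ}

theorem modEq_of_mul_add_mul_eq {a x n w m : ℕ} (ha : a ≡ 1 [MOD n]) (h : a * x + n * w = m) :
    m ≡ x [MOD n] :=
  calc m = a * x + n * w := h.symm
    _ ≡ 1 * x + 0 [MOD n] := (ha.mul_right x).add (Nat.modEq_zero_iff_dvd.2 (dvd_mul_right n w))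
    _ = x := by ring

theorem rep_eq_iff (hu : u * Q ≡ 1 [MOD P]) (hv : P * v ≡ 1 [MOD Q]) {x₀ z₀ L m : ℕ}
    (hx₀ : x₀ < P) (hz₀ : z₀ < Q) (hm : u * Q * x₀ + P * Q * L + P * v * z₀ = m)
    {x y z : ℕ} :
    u * Q * x + P * Q * y + P * v * z = m ↔
      ∃ i j, x = x₀ + P * i ∧ z = z₀ + Q * j ∧ u * i + v * j + y = L := by
  constructor
  · intro h
    have hx : x % P = x₀ := by
      rw [← Nat.mod_eq_of_lt hx₀]
      exact (modEq_of_mul_add_mul_eq hu (m := m) (w := Q * y + v * z)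
          (by rw [← h]; ring)).symm.trans
        (modEq_of_mul_add_mul_eq hu (m := m) (w := Q * L + v * z₀) (by rw [← hm]; ring))
    have hz : z % Q = z₀ := by
      rw [← Nat.mod_eq_of_lt hz₀]
      exact (modEq_of_mul_add_mul_eq hv (m := m) (w := u * x + P * y)
          (by rw [← h]; ring)).symm.trans
        (modEq_of_mul_add_mul_eq hv (m := m) (w := u * x₀ + P * L) (by rw [← hm]; ring))
    refine ⟨x / P, z / Q, by rw [← hx, Nat.mod_add_div], by rw [← hz, Nat.mod_add_div], ?_⟩
    have hPQ : 0 < P * Q := Nat.mul_pos (by omega) (by omega)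
    refine Nat.eq_of_mul_eq_mul_left hPQ ?_
    have ex := Nat.mod_add_div x P
    have ez := Nat.mod_add_div z Q
    rw [hx] at ex
    rw [hz] at ez
    rw [← ex, ← ez] at h
    linarith
  · rintro ⟨i, j, rfl, rfl, rfl⟩
    rw [← hm]; ring

theorem repCount_eq_card_latticePoints (hu0 : 0 < u) (hv0 : 0 < v) (hu : u * Q ≡ 1 [MOD P])
    (hv : P * v ≡ 1 [MOD Q]) {x₀ z₀ L m : ℕ} (hx₀ : x₀ < P) (hz₀ : z₀ < Q)
    (hm : u * Q * x₀ + P * Q * L + P * v * z₀ = m) :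
    repCount ![u * Q, P * Q, P * v] m = #(latticePoints u v L) := by
  have hsum (w : Fin 3 → Fin (m + 1)) :
      ∑ i, ![u * Q, P * Q, P * v] i * (w i : ℕ) = u * Q * w 0 + P * Q * w 1 + P * v * w 2 := by
    simp [Fin.sum_univ_three]
  have hdiv {r c i : ℕ} (hr : r < c) : (r + c * i) / c = i := by
    rw [Nat.add_mul_div_left _ _ (by omega), Nat.div_eq_of_lt hr, zero_add]
  have hbound {c w : ℕ} (hc : 0 < c) (h : c * w ≤ m) : w < m + 1 := by
    have := Nat.le_mul_of_pos_left w hc; omega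
  have hQ : 0 < Q := by omega
  have hP : 0 < P := by omega
  unfold repCount
  refine card_bij (fun w _ => ((w 0 : ℕ) / P, (w 2 : ℕ) / Q)) ?_ ?_ ?_
  · intro w hw
    simp only [mem_filter, mem_univ, true_and, hsum] at hw
    obtain ⟨i, j, hx, hz, hy⟩ := (rep_eq_iff hu hv hx₀ hz₀ hm).1 hw
    have := Nat.le_mul_of_pos_left i hu0
    have := Nat.le_mul_of_pos_left j hv0
    simp only [latticePoints, mem_filter, mem_product, mem_range, hx, hz, hdiv hx₀, hdiv hz₀]
    omega
  · intro w hw w' hw' heq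
    simp only [mem_filter, mem_univ, true_and, hsum] at hw hw'
    obtain ⟨i, j, hx, hz, hy⟩ := (rep_eq_iff hu hv hx₀ hz₀ hm).1 hw
    obtain ⟨i', j', hx', hz', hy'⟩ := (rep_eq_iff hu hv hx₀ hz₀ hm).1 hw'
    simp only [hx, hz, hx', hz', hdiv hx₀, hdiv hz₀, Prod.mk.injEq] at heq
    obtain ⟨rfl, rfl⟩ := heq
    ext idx
    fin_cases idx <;> simp only [Fin.zero_eta, Fin.mk_one, Fin.reduceFinMk] <;> omega
  · rintro ⟨i, j⟩ hp
    simp only [latticePoints, mem_filter, mem_product, mem_range] at hp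
    have hrep : u * Q * (x₀ + P * i) + P * Q * (L - u * i - v * j) + P * v * (z₀ + Q * j) = m :=
      (rep_eq_iff hu hv hx₀ hz₀ hm).2 ⟨i, j, rfl, rfl, by omega⟩
    refine ⟨![⟨x₀ + P * i, hbound (Nat.mul_pos hu0 hQ) (by rw [← hrep]; omega)⟩,
      ⟨L - u * i - v * j, hbound (Nat.mul_pos hP hQ) (by rw [← hrep]; omega)⟩,
      ⟨z₀ + Q * j, hbound (Nat.mul_pos hP hv0) (by rw [← hrep]; omega)⟩], ?_, ?_⟩
    · simpa [hsum] using hrep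
    · simp [hdiv hx₀, hdiv hz₀]

theorem exists_int_rep_mod (hu : u * Q ≡ 1 [MOD P]) (hv : P * v ≡ 1 [MOD Q]) (m : ℕ) :
    ∃ L : ℤ, u * Q * (m % P : ℕ) + P * Q * L + P * v * (m % Q : ℕ) = (m : ℤ) := by
  have hcop : IsCoprime (P : ℤ) Q := Nat.isCoprime_iff_coprime.2
    (Nat.coprime_of_mul_modEq_one u (by rwa [mul_comm] at hu)).symm
  have hP : u * Q * (m % P) + P * v * (m % Q) ≡ m [MOD P] :=
    (modEq_of_mul_add_mul_eq hu (w := v * (m % Q)) (by ring)).trans (Nat.mod_modEq m P)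
  have hQ : u * Q * (m % P) + P * v * (m % Q) ≡ m [MOD Q] :=
    (modEq_of_mul_add_mul_eq hv (w := u * (m % P)) (by ring)).trans (Nat.mod_modEq m Q)
  obtain ⟨L, hL⟩ := hcop.mul_dvd (Nat.modEq_iff_dvd.1 hP) (Nat.modEq_iff_dvd.1 hQ)
  exact ⟨L, by push_cast at hL ⊢; linarith⟩

theorem genFrob_eq_of_card_latticePoints {s M : ℕ} (hu0 : 0 < u) (hv0 : 0 < v)
    (hu : u * Q ≡ 1 [MOD P]) (hv : P * v ≡ 1 [MOD Q]) (hP : 0 < P) (hQ : 0 < Q)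
    (hM : #(latticePoints u v M) ≤ s) (hM' : s < #(latticePoints u v (M + 1))) :
    genFrob ![u * Q, P * Q, P * v] s = u * Q * (P - 1 : ℤ) + P * Q * M + P * v * (Q - 1 : ℤ) := by
  set F := u * Q * (P - 1) + P * Q * M + P * v * (Q - 1) with hF
  have hFZ : (F : ℤ) = u * Q * (P - 1 : ℤ) + P * Q * M + P * v * (Q - 1 : ℤ) := by
    rw [hF]; push_cast [Nat.cast_sub hP, Nat.cast_sub hQ]; ring
  have hlarge (m : ℕ) (hm : F < m) : s < repCount ![u * Q, P * Q, P * v] m := by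
    obtain ⟨L, hL⟩ := exists_int_rep_mod hu hv m
    have hx : u * Q * (m % P) ≤ u * Q * (P - 1) :=
      Nat.mul_le_mul_left _ (Nat.le_pred_of_lt (Nat.mod_lt m hP))
    have hz : P * v * (m % Q) ≤ P * v * (Q - 1) :=
      Nat.mul_le_mul_left _ (Nat.le_pred_of_lt (Nat.mod_lt m hQ))
    have hML : (M : ℤ) + 1 ≤ L := by
      by_contra! h
      have : (P * Q : ℤ) * L ≤ P * Q * M := mul_le_mul_of_nonneg_left (by omega) (by positivity)
      have hx' : ((u * Q * (m % P) : ℕ) : ℤ) ≤ (u * Q * (P - 1) : ℕ) := Nat.cast_le.2 hx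
      have hz' : ((P * v * (m % Q) : ℕ) : ℤ) ≤ (P * v * (Q - 1) : ℕ) := Nat.cast_le.2 hz
      have : (m : ℤ) ≤ F := by
        simp only [hF, Nat.cast_add, Nat.cast_mul] at hx' hz' ⊢; linarith
      omega
    lift L to ℕ using by omega
    rw [repCount_eq_card_latticePoints hu0 hv0 hu hv (Nat.mod_lt m hP) (Nat.mod_lt m hQ)
      (by exact_mod_cast hL)]
    exact hM'.trans_le (card_le_card (latticePoints_mono (by omega)))
  have hgreatest : IsGreatest {m : ℤ | repCountZ ![u * Q, P * Q, P * v] m ≤ s} F := by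
    refine ⟨?_, fun m hm => ?_⟩
    · simp only [Set.mem_ofPred_eq, repCountZ, Nat.cast_nonneg, if_true, Int.toNat_natCast]
      rwa [repCount_eq_card_latticePoints hu0 hv0 hu hv (Nat.sub_one_lt_of_lt hP)
        (Nat.sub_one_lt_of_lt hQ) rfl]
    · by_contra! h
      have h0 : 0 ≤ m := by omega
      simp only [Set.mem_ofPred_eq, repCountZ, h0, if_true] at hm
      exact (hlarge m.toNat (by omega)).not_ge hm
  rw [genFrob, hgreatest.csSup_eq, hFZ]

end Representation

theorem latticePoints_even {k : ℕ} (hk : 10 ≤ k) :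
    latticePoints k (2 * k + 3) (7 * k - 1) =
      {(0, 0), (1, 0), (2, 0), (3, 0), (4, 0), (5, 0), (6, 0), (0, 1), (1, 1), (2, 1), (3, 1),
        (4, 1), (0, 2), (1, 2), (2, 2), (0, 3)} := by
  ext ⟨i, j⟩
  simp only [latticePoints, mem_filter, mem_product, mem_range, mem_insert, mem_singleton,
    Prod.mk.injEq]
  constructor
  · rintro ⟨-, h⟩
    have hi : i ≤ 6 := by
      by_contra! hi; have := Nat.mul_le_mul_left k hi; omega
    have hj : j ≤ 3 := by
      by_contra! hj; have := Nat.mul_le_mul_left (2 * k + 3) hj; omega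
    interval_cases i <;> interval_cases j <;> first | decide | (exfalso; omega)
  · intro h
    rcases h with ⟨rfl, rfl⟩ | ⟨rfl, rfl⟩ | ⟨rfl, rfl⟩ | ⟨rfl, rfl⟩ | ⟨rfl, rfl⟩ | ⟨rfl, rfl⟩ |
      ⟨rfl, rfl⟩ | ⟨rfl, rfl⟩ | ⟨rfl, rfl⟩ | ⟨rfl, rfl⟩ | ⟨rfl, rfl⟩ | ⟨rfl, rfl⟩ | ⟨rfl, rfl⟩ |
      ⟨rfl, rfl⟩ | ⟨rfl, rfl⟩ | ⟨rfl, rfl⟩ <;> omega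

theorem latticePoints_odd {k : ℕ} (hk : 8 ≤ k) :
    latticePoints (2 * k + 1) (k + 2) (7 * k + 4) =
      {(0, 0), (1, 0), (2, 0), (3, 0), (0, 1), (1, 1), (2, 1), (0, 2), (1, 2), (2, 2), (0, 3),
        (1, 3), (0, 4), (1, 4), (0, 5), (0, 6)} := by
  ext ⟨i, j⟩
  simp only [latticePoints, mem_filter, mem_product, mem_range, mem_insert, mem_singleton,
    Prod.mk.injEq]
  constructor
  · rintro ⟨-, h⟩
    have hi : i ≤ 3 := by
      by_contra! hi; have := Nat.mul_le_mul_left (2 * k + 1) hi; omega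
    have hj : j ≤ 6 := by
      by_contra! hj; have := Nat.mul_le_mul_left (k + 2) hj; omega
    interval_cases i <;> interval_cases j <;> first | decide | (exfalso; omega)
  · intro h
    rcases h with ⟨rfl, rfl⟩ | ⟨rfl, rfl⟩ | ⟨rfl, rfl⟩ | ⟨rfl, rfl⟩ | ⟨rfl, rfl⟩ | ⟨rfl, rfl⟩ |
      ⟨rfl, rfl⟩ | ⟨rfl, rfl⟩ | ⟨rfl, rfl⟩ | ⟨rfl, rfl⟩ | ⟨rfl, rfl⟩ | ⟨rfl, rfl⟩ | ⟨rfl, rfl⟩ |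
      ⟨rfl, rfl⟩ | ⟨rfl, rfl⟩ | ⟨rfl, rfl⟩ <;> omega

theorem t_eq_of_mul_succ_eq {n m : ℕ} (h : n * (n + 1) = 2 * m) : t n = m := by
  rw [t, h, Nat.mul_div_cancel_left m two_pos]

theorem genFrob_t_even {k : ℕ} (hk : 10 ≤ k) :
    genFrob ![t (2 * k), t (2 * k + 1), t (2 * k + 2)] 16 =
      10 * k * (k + 1) * (2 * k + 1) - 1 := by
  have hcard : #(latticePoints k (2 * k + 3) (7 * k - 1)) = 16 := by
    rw [latticePoints_even hk]; rfl
  have hu : k * (2 * k + 1) ≡ 1 [MOD k + 1] :=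
    Nat.modEq_iff_dvd.2 ⟨1 - 2 * k, by push_cast; ring⟩
  have hv : (k + 1) * (2 * k + 3) ≡ 1 [MOD 2 * k + 1] :=
    Nat.modEq_iff_dvd.2 ⟨-(k + 2), by push_cast; ring⟩
  rw [t_eq_of_mul_succ_eq (m := k * (2 * k + 1)) (by ring),
    t_eq_of_mul_succ_eq (m := (k + 1) * (2 * k + 1)) (by ring),
    t_eq_of_mul_succ_eq (m := (k + 1) * (2 * k + 3)) (by ring),
    genFrob_eq_of_card_latticePoints (by omega) (by omega) hu hv (by omega) (by omega) hcard.le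
      (hcard ▸ card_latticePoints_lt_succ (i := 7) (j := 0) (by omega) (by omega) (by omega))]
  push_cast [Nat.cast_sub (by omega : 1 ≤ 7 * k)]
  ring

theorem genFrob_t_odd {k : ℕ} (hk : 8 ≤ k) :
    genFrob ![t (2 * k + 1), t (2 * k + 1 + 1), t (2 * k + 1 + 2)] 16 =
      5 * (2 * k + 1) * (k + 1) * (2 * k + 3) - 1 := by
  have hcard : #(latticePoints (2 * k + 1) (k + 2) (7 * k + 4)) = 16 := by
    rw [latticePoints_odd hk]; rfl
  have hu : (2 * k + 1) * (k + 1) ≡ 1 [MOD 2 * k + 3] :=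
    Nat.modEq_iff_dvd.2 ⟨-k, by push_cast; ring⟩
  have hv : (2 * k + 3) * (k + 2) ≡ 1 [MOD k + 1] :=
    Nat.modEq_iff_dvd.2 ⟨-(2 * k + 5), by push_cast; ring⟩
  rw [t_eq_of_mul_succ_eq (m := (2 * k + 1) * (k + 1)) (by ring),
    t_eq_of_mul_succ_eq (m := (2 * k + 3) * (k + 1)) (by ring),
    t_eq_of_mul_succ_eq (m := (2 * k + 3) * (k + 2)) (by ring),
    genFrob_eq_of_card_latticePoints (by omega) (by omega) hu hv (by omega) (by omega) hcard.le
      (hcard ▸ card_latticePoints_lt_succ (i := 3) (j := 1) (by omega) (by omega) (by ring))]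
  push_cast
  ring

/-- `g(t_n, t_{n+1}, t_{n+2}; 16) = ((n+1)(n+2)/4)(10n) - 1` for `n = 17` and for
every integer `n ≥ 19`. -/
theorem stmt_19 (n : ℕ) (hn : n = 17 ∨ 19 ≤ n) :
    genFrob ![t n, t (n + 1), t (n + 2)] 16 =
      ((n : ℤ) + 1) * ((n : ℤ) + 2) * (10 * (n : ℤ)) / 4 - 1 := by
  obtain ⟨k, rfl | rfl⟩ := Nat.even_or_odd' n
  · rw [genFrob_t_even (by omega)]
    push_cast
    rw [show ((2 * k + 1) * (2 * k + 2) * (10 * (2 * k)) : ℤ) =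
      4 * (10 * k * (k + 1) * (2 * k + 1)) by ring, Int.mul_ediv_cancel_left _ four_ne_zero]
  · rw [genFrob_t_odd (by omega)]
    push_cast
    rw [show ((2 * k + 1 + 1) * (2 * k + 1 + 2) * (10 * (2 * k + 1)) : ℤ) =
      4 * (5 * (2 * k + 1) * (k + 1) * (2 * k + 3)) by ring,
      Int.mul_ediv_cancel_left _ four_ne_zero]
end
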